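/- arXiv:1909.07567 — 3 statements merged into one kernel-verified Lean document; each statement's English description precedes it below -/
import Mathlib

section
/- Let 0 < β < 1, γ > 0, C > 0, and let H be a probability measure on (0,∞) with mean 1/μ ∈ (0,∞), whose tail H̄(y) = H((y,∞)) satisfies H̄(y) ≤ C·exp(−γ y^β) for all y ≥ 0. Let 0 < λ < μ and let ρ̃ ∈ (λ/μ, 1). Then there exists ε ∈ (0,γ) such that for all x₀ > 0 and all x ≥ 0: λ∫₀^∞ H̄(y) (x+x₀+y)^{β−1} exp(ε(x+x₀+y)^β) dy ≤ ρ̃ (x+x₀)^{β−1} exp(ε(x+x₀)^β). -/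
open MeasureTheory Set

lemma aux_integrable {β b s : ℝ} (hβ : 0 < β) (hb : 0 < b) (hs : -1 < s) :
    MeasureTheory.IntegrableOn (fun y : ℝ => y ^ s * Real.exp (-b * y ^ β)) (Set.Ioi 0) := by
  have hq1 : (-1 : ℝ) < (s + 1) / β - 1 := by
    have : 0 < (s + 1) / β := div_pos (by linarith) hβ
    linarith
  have hint : MeasureTheory.IntegrableOn
      (fun u : ℝ => u ^ ((s + 1) / β - 1) * Real.exp (-b * u)) (Set.Ioi 0) := by
    have := integrableOn_rpow_mul_exp_neg_mul_rpow (p := 1) (s := (s + 1) / β - 1) (b := b)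
      hq1 one_pos hb
    simpa [Real.rpow_one] using this
  have h2 := (integrableOn_Ioi_comp_rpow_iff'
    (fun u : ℝ => u ^ ((s + 1) / β - 1) * Real.exp (-b * u)) (p := β) hβ.ne').mpr hint
  refine h2.congr_fun (fun x hx => ?_) measurableSet_Ioi
  have hx0 : (0:ℝ) < x := hx
  have h3 : (x ^ β) ^ ((s + 1) / β - 1) = x ^ (β * ((s + 1) / β - 1)) :=
    (Real.rpow_mul hx0.le _ _).symm
  simp only [smul_eq_mul]
  rw [h3, ← mul_assoc, ← Real.rpow_add hx0]
  congr 2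
  field_simp
  ring

lemma aux_subadd {a y p : ℝ} (ha : 0 ≤ a) (hy : 0 ≤ y) (hp : 0 ≤ p) (hp1 : p ≤ 1) :
    (a + y) ^ p ≤ a ^ p + y ^ p := by
  have h := NNReal.rpow_add_le_add_rpow (Real.toNNReal a) (Real.toNNReal y) hp hp1
  have h2 := NNReal.coe_le_coe.mpr h
  push_cast at h2
  rwa [Real.coe_toNNReal _ ha, Real.coe_toNNReal _ hy] at h2

lemma aux_exp_sub_one (s : ℝ) : Real.exp s - 1 ≤ s * Real.exp s := by
  have h1 : (-s) + 1 ≤ Real.exp (-s) := Real.add_one_le_exp _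
  have h2 : Real.exp (-s) = (Real.exp s)⁻¹ := Real.exp_neg s
  have h3 : 0 < Real.exp s := Real.exp_pos s
  rw [h2] at h1
  have h4 : (-s + 1) * Real.exp s ≤ 1 := by
    have h5 := mul_le_mul_of_nonneg_right h1 h3.le
    rwa [inv_mul_cancel₀ h3.ne'] at h5
  nlinarith [h4]

set_option maxHeartbeats 1000000 in
/-- Inequality (4.28) of the paper: for `H` on `(0,∞)` with mean `1/μ` and tail
`H̄(y) ≤ C e^{−γ y^β}` (`0 < β < 1`), arrival rate `0 < λ < μ` and `ρ̃ ∈ (λ/μ, 1)`,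
there exists `ε ∈ (0,γ)` such that for all `x₀ > 0` and `x ≥ 0`,
`λ∫₀^∞ H̄(y) (x+x₀+y)^{β−1} e^{ε(x+x₀+y)^β} dy ≤ ρ̃ (x+x₀)^{β−1} e^{ε(x+x₀)^β}`. -/
theorem stmt5 (β γ C : ℝ) (hβ0 : 0 < β) (hβ1 : β < 1) (hγ : 0 < γ) (hC : 0 < C)
    (H : Measure ℝ) [IsProbabilityMeasure H] (hH0 : H (Set.Iic 0) = 0)
    (μ : ℝ) (hμ : 0 < μ)
    (hmeanInt : IntegrableOn (fun y : ℝ => y) (Set.Ioi 0) H)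
    (hmean : ∫ y in Set.Ioi (0 : ℝ), y ∂H = 1 / μ)
    (htail : ∀ y : ℝ, 0 ≤ y → (H (Set.Ioi y)).toReal ≤ C * Real.exp (-γ * y ^ β))
    (lam ρ' : ℝ) (hlam : 0 < lam) (hlamμ : lam < μ) (hρ'1 : lam / μ < ρ') (hρ'2 : ρ' < 1) :
    ∃ ε ∈ Set.Ioo 0 γ, ∀ x₀ : ℝ, 0 < x₀ → ∀ x : ℝ, 0 ≤ x →
      lam * ∫ y in Set.Ioi (0 : ℝ), (H (Set.Ioi y)).toReal *
          ((x + x₀ + y) ^ (β - 1) * Real.exp (ε * (x + x₀ + y) ^ β))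
        ≤ ρ' * ((x + x₀) ^ (β - 1) * Real.exp (ε * (x + x₀) ^ β)) := by
  have hHbar_nonneg : ∀ y : ℝ, 0 ≤ (H (Set.Ioi y)).toReal := fun y => ENNReal.toReal_nonneg
  have hmeas : Measurable fun y : ℝ => (H (Set.Ioi y)).toReal := by
    apply Measurable.ennreal_toReal
    exact Antitone.measurable (fun s t hst => measure_mono (Set.Ioi_subset_Ioi hst))
  -- integrability of the tail function
  have hint0 : IntegrableOn (fun y : ℝ => C * Real.exp (-γ * y ^ β)) (Set.Ioi 0) := by
    have h : IntegrableOn (fun y : ℝ => C * (y ^ (0:ℝ) * Real.exp (-γ * y ^ β)))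
        (Set.Ioi 0) := (aux_integrable (b := γ) (s := 0) hβ0 hγ (by norm_num)).const_mul C
    refine h.congr_fun (fun x hx => ?_) measurableSet_Ioi
    simp [Real.rpow_zero]
  have hHint : IntegrableOn (fun y : ℝ => (H (Set.Ioi y)).toReal) (Set.Ioi 0) := by
    refine hint0.mono' hmeas.aestronglyMeasurable ?_
    refine (ae_restrict_iff' measurableSet_Ioi).mpr (Filter.Eventually.of_forall fun y hy => ?_)
    rw [Real.norm_eq_abs, abs_of_nonneg (hHbar_nonneg y)]
    exact htail y (le_of_lt hy)
  -- layer cake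
  have hrestrict : H.restrict (Set.Ioi 0) = H := by
    apply Measure.restrict_eq_self_of_ae_mem
    rw [ae_iff]
    refine measure_mono_null ?_ hH0
    intro z hz
    simpa using hz
  have hid_int : Integrable (fun x : ℝ => x) H := by
    rw [← hrestrict]; exact hmeanInt
  have hid_nn : 0 ≤ᵐ[H] fun x : ℝ => x := by
    have : ∀ᵐ x ∂H, 0 ≤ x := by
      rw [ae_iff]
      refine measure_mono_null ?_ hH0
      intro z hz
      simp only [Set.mem_setOf_eq, not_le] at hz
      exact Set.mem_Iic.mpr hz.le
    exact this
  have hmean' : ∫ y in Set.Ioi (0:ℝ), (H (Set.Ioi y)).toReal = 1 / μ := by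
    have hlayer := hid_int.integral_eq_integral_meas_lt hid_nn
    have h1 : ∫ x : ℝ, x ∂H = 1 / μ := by
      rw [← hmean]
      show ∫ x : ℝ, x ∂H = ∫ x : ℝ, x ∂(H.restrict (Set.Ioi 0))
      rw [hrestrict]
    rw [h1] at hlayer
    have h2 : ∫ y in Set.Ioi (0:ℝ), (H (Set.Ioi y)).toReal
        = ∫ t in Set.Ioi (0:ℝ), (H {a : ℝ | t < a}).toReal := by
      refine setIntegral_congr_fun measurableSet_Ioi (fun t _ => ?_)
      rfl
    rw [h2]
    exact hlayer.symm
  -- constants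
  set K := ∫ y in Set.Ioi (0:ℝ), C * (y ^ β * Real.exp (-(γ/2) * y ^ β)) with hK
  have hK_int : IntegrableOn (fun y : ℝ => C * (y ^ β * Real.exp (-(γ/2) * y ^ β)))
      (Set.Ioi 0) := (aux_integrable hβ0 (by linarith) (by linarith)).const_mul C
  have hK0 : 0 ≤ K := by
    refine setIntegral_nonneg measurableSet_Ioi (fun y hy => ?_)
    have hy0 : 0 < y := hy
    have h1 : 0 ≤ y ^ β := Real.rpow_nonneg hy0.le _
    positivity
  have hD : 0 < ρ' / lam - 1 / μ := by
    have h1 : lam < ρ' * μ := by rw [div_lt_iff₀ hμ] at hρ'1; linarith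
    rw [sub_pos, div_lt_div_iff₀ hμ hlam]
    linarith
  set ε := min (γ/2) ((ρ'/lam - 1/μ) / (K + 1)) with hε
  have hε0 : 0 < ε := lt_min (by linarith) (div_pos hD (by linarith))
  have hεγ2 : ε ≤ γ/2 := min_le_left _ _
  refine ⟨ε, ⟨hε0, by linarith⟩, ?_⟩
  -- the key scalar bound ∫ H̄(y) e^{ε y^β} ≤ ρ'/lam
  have hexp_meas : Measurable fun y : ℝ => Real.exp (ε * y ^ β) := by measurability
  have hbound_ptwise : ∀ y ∈ Set.Ioi (0:ℝ),
      (H (Set.Ioi y)).toReal * Real.exp (ε * y ^ β)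
        ≤ (H (Set.Ioi y)).toReal + ε * (C * (y ^ β * Real.exp (-(γ/2) * y ^ β))) := by
    intro y hy
    have hy0 : (0:ℝ) ≤ y := (le_of_lt hy)
    have ht0 : 0 ≤ y ^ β := Real.rpow_nonneg hy0 _
    have h1 : (H (Set.Ioi y)).toReal ≤ C * Real.exp (-γ * y ^ β) := htail y hy0
    have h2 : Real.exp (ε * y ^ β) - 1 ≤ (ε * y ^ β) * Real.exp (ε * y ^ β) :=
      aux_exp_sub_one _
    have hge1 : 0 ≤ Real.exp (ε * y ^ β) - 1 := by
      have := Real.one_le_exp (by positivity : (0:ℝ) ≤ ε * y ^ β)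
      linarith
    have h3 : Real.exp (-γ * y ^ β) * Real.exp (ε * y ^ β)
        = Real.exp ((ε - γ) * y ^ β) := by
      rw [← Real.exp_add]; ring_nf
    have h4 : Real.exp ((ε - γ) * y ^ β) ≤ Real.exp (-(γ/2) * y ^ β) := by
      apply Real.exp_le_exp.mpr
      have : ε - γ ≤ -(γ/2) := by linarith
      nlinarith
    calc (H (Set.Ioi y)).toReal * Real.exp (ε * y ^ β)
        = (H (Set.Ioi y)).toReal
            + (H (Set.Ioi y)).toReal * (Real.exp (ε * y ^ β) - 1) := by ring
      _ ≤ (H (Set.Ioi y)).toReal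
            + (C * Real.exp (-γ * y ^ β)) * (Real.exp (ε * y ^ β) - 1) := by
          exact add_le_add_right (mul_le_mul_of_nonneg_right h1 hge1) _
      _ ≤ (H (Set.Ioi y)).toReal
            + (C * Real.exp (-γ * y ^ β)) * ((ε * y ^ β) * Real.exp (ε * y ^ β)) := by
          refine add_le_add_right (mul_le_mul_of_nonneg_left h2 ?_) _
          positivity
      _ = (H (Set.Ioi y)).toReal
            + ε * (C * (y ^ β * (Real.exp (-γ * y ^ β) * Real.exp (ε * y ^ β)))) := by ring
      _ = (H (Set.Ioi y)).toReal
            + ε * (C * (y ^ β * Real.exp ((ε - γ) * y ^ β))) := by rw [h3]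
      _ ≤ (H (Set.Ioi y)).toReal
            + ε * (C * (y ^ β * Real.exp (-(γ/2) * y ^ β))) := by
          refine add_le_add_right ?_ _
          refine mul_le_mul_of_nonneg_left (mul_le_mul_of_nonneg_left
            (mul_le_mul_of_nonneg_left h4 ht0) hC.le) hε0.le
  have hsum_int : IntegrableOn
      (fun y : ℝ => (H (Set.Ioi y)).toReal + ε * (C * (y ^ β * Real.exp (-(γ/2) * y ^ β))))
      (Set.Ioi 0) := hHint.add (hK_int.const_mul ε)
  have hint1 : IntegrableOn (fun y : ℝ => (H (Set.Ioi y)).toReal * Real.exp (ε * y ^ β))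
      (Set.Ioi 0) := by
    refine hsum_int.mono' (hmeas.mul hexp_meas).aestronglyMeasurable ?_
    refine (ae_restrict_iff' measurableSet_Ioi).mpr (Filter.Eventually.of_forall fun y hy => ?_)
    rw [Real.norm_eq_abs, abs_of_nonneg (by positivity)]
    exact hbound_ptwise y hy
  have hkey : ∫ y in Set.Ioi (0:ℝ), (H (Set.Ioi y)).toReal * Real.exp (ε * y ^ β)
      ≤ ρ' / lam := by
    have hle := setIntegral_mono_on hint1 hsum_int measurableSet_Ioi hbound_ptwise
    have heq : ∫ y in Set.Ioi (0:ℝ),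
        ((H (Set.Ioi y)).toReal + ε * (C * (y ^ β * Real.exp (-(γ/2) * y ^ β))))
        = 1 / μ + ε * K := by
      rw [integral_add hHint (hK_int.const_mul ε), hmean', integral_const_mul]
    have hεK : ε * K ≤ ρ'/lam - 1/μ := by
      have h5 : ε ≤ (ρ'/lam - 1/μ)/(K+1) := min_le_right _ _
      have h6 : ε * K ≤ ((ρ'/lam - 1/μ)/(K+1)) * K := mul_le_mul_of_nonneg_right h5 hK0
      have h7 : ((ρ'/lam - 1/μ)/(K+1)) * K ≤ ρ'/lam - 1/μ := by
        rw [div_mul_eq_mul_div, div_le_iff₀ (by linarith)]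
        nlinarith
      linarith
    rw [heq] at hle
    linarith
  -- main estimate
  intro x₀ hx₀ x hx
  set a := x + x₀ with ha
  have ha0 : 0 < a := by positivity
  have haexp : (0:ℝ) ≤ a ^ (β - 1) * Real.exp (ε * a ^ β) := by
    have := Real.rpow_nonneg ha0.le (β - 1)
    positivity
  have hptw : ∀ y ∈ Set.Ioi (0:ℝ),
      (H (Set.Ioi y)).toReal * ((a + y) ^ (β - 1) * Real.exp (ε * (a + y) ^ β))
        ≤ ((H (Set.Ioi y)).toReal * Real.exp (ε * y ^ β))
            * (a ^ (β - 1) * Real.exp (ε * a ^ β)) := by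
    intro y hy
    have hy0 : (0:ℝ) < y := hy
    have h1 : (a + y) ^ (β - 1) ≤ a ^ (β - 1) :=
      Real.rpow_le_rpow_of_nonpos ha0 (by linarith) (by linarith)
    have h2 : Real.exp (ε * (a + y) ^ β) ≤ Real.exp (ε * a ^ β) * Real.exp (ε * y ^ β) := by
      rw [← Real.exp_add]
      apply Real.exp_le_exp.mpr
      have hsub := aux_subadd (a := a) (y := y) ha0.le hy0.le hβ0.le hβ1.le
      have := mul_le_mul_of_nonneg_left hsub hε0.le
      linarith [this]
    calc (H (Set.Ioi y)).toReal * ((a + y) ^ (β - 1) * Real.exp (ε * (a + y) ^ β))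
        ≤ (H (Set.Ioi y)).toReal
            * (a ^ (β - 1) * (Real.exp (ε * a ^ β) * Real.exp (ε * y ^ β))) := by
          refine mul_le_mul_of_nonneg_left ?_ (hHbar_nonneg y)
          refine mul_le_mul h1 h2 (Real.exp_pos _).le (Real.rpow_nonneg ha0.le _)
      _ = ((H (Set.Ioi y)).toReal * Real.exp (ε * y ^ β))
            * (a ^ (β - 1) * Real.exp (ε * a ^ β)) := by ring
  have hg_nn : 0 ≤ᵐ[volume.restrict (Set.Ioi (0:ℝ))]
      fun y : ℝ => (H (Set.Ioi y)).toReal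
        * ((a + y) ^ (β - 1) * Real.exp (ε * (a + y) ^ β)) := by
    refine (ae_restrict_iff' measurableSet_Ioi).mpr (Filter.Eventually.of_forall fun y hy => ?_)
    have hy0 : (0:ℝ) < y := hy
    have h1 : (0:ℝ) ≤ (a + y) ^ (β - 1) := Real.rpow_nonneg (by linarith) _
    have h2 := hHbar_nonneg y
    exact mul_nonneg h2 (mul_nonneg h1 (Real.exp_pos _).le)
  have hG_int : Integrable (fun y : ℝ =>
      ((H (Set.Ioi y)).toReal * Real.exp (ε * y ^ β))
        * (a ^ (β - 1) * Real.exp (ε * a ^ β))) (volume.restrict (Set.Ioi 0)) :=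
    hint1.mul_const _
  have h_ae_le : (fun y : ℝ => (H (Set.Ioi y)).toReal
        * ((a + y) ^ (β - 1) * Real.exp (ε * (a + y) ^ β)))
      ≤ᵐ[volume.restrict (Set.Ioi (0:ℝ))]
      (fun y : ℝ => ((H (Set.Ioi y)).toReal * Real.exp (ε * y ^ β))
        * (a ^ (β - 1) * Real.exp (ε * a ^ β))) := by
    refine (ae_restrict_iff' measurableSet_Ioi).mpr (Filter.Eventually.of_forall hptw)
  have hmono := integral_mono_of_nonneg hg_nn hG_int h_ae_le
  rw [integral_mul_const] at hmono
  calc lam * ∫ y in Set.Ioi (0:ℝ), (H (Set.Ioi y)).toReal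
          * ((a + y) ^ (β - 1) * Real.exp (ε * (a + y) ^ β))
      ≤ lam * ((∫ y in Set.Ioi (0:ℝ), (H (Set.Ioi y)).toReal * Real.exp (ε * y ^ β))
          * (a ^ (β - 1) * Real.exp (ε * a ^ β))) := mul_le_mul_of_nonneg_left hmono hlam.le
    _ ≤ lam * ((ρ' / lam) * (a ^ (β - 1) * Real.exp (ε * a ^ β))) :=
        mul_le_mul_of_nonneg_left (mul_le_mul_of_nonneg_right hkey haexp) hlam.le
    _ = ρ' * (a ^ (β - 1) * Real.exp (ε * a ^ β)) := by field_simp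
end

section
/- Let κ > 1, C > 0, 1 < κ̃ < κ, and let H̄ : [0,∞) → [0,1] satisfy H̄(y) ≤ C(y+1)^{−κ} for all y ≥ 0. Then for all x ≥ 0 and x₀ ≥ 1: ∫₀^∞ H̄(y) · ((x+x₀+y)/(x+x₀))^{κ̃−1} dy ≤ 2^{κ̃−1} C / (κ − κ̃) < ∞. -/
open MeasureTheory Set

open Filter Real
theorem aux_integrable_s7 (p : ℝ) (hp : p < -1) :
    IntegrableOn (fun y : ℝ => (y + 1) ^ p) (Ioi 0) := by
  have hcont : ∀ s : Set ℝ, (∀ y ∈ s, (0:ℝ) < y + 1) →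
      ContinuousOn (fun y : ℝ => (y + 1) ^ p) s := fun s hs =>
    (continuousOn_id.add continuousOn_const).rpow_const fun y hy => Or.inl (ne_of_gt (hs y hy))
  have h1 : IntegrableOn (fun y : ℝ => (y + 1) ^ p) (Ioc 0 1) :=
    ((hcont (Icc 0 1) fun y hy => by linarith [hy.1]).integrableOn_Icc).mono_set
      Ioc_subset_Icc_self
  have h2 : IntegrableOn (fun y : ℝ => (y + 1) ^ p) (Ioi 1) := by
    refine (integrableOn_Ioi_rpow_of_lt hp one_pos).mono' ?_ ?_
    · exact (hcont (Ioi 1) fun y hy => by simp only [mem_Ioi] at hy; linarith).aestronglyMeasurable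
        measurableSet_Ioi
    · filter_upwards [ae_restrict_mem measurableSet_Ioi] with y hy
      simp only [mem_Ioi] at hy
      rw [Real.norm_eq_abs, abs_of_nonneg (Real.rpow_nonneg (by linarith) _)]
      exact Real.rpow_le_rpow_of_nonpos (by linarith) (by linarith) (by linarith)
  have := h1.union h2
  rwa [Ioc_union_Ioi_eq_Ioi zero_le_one] at this

theorem aux_integral (p : ℝ) (hp : p < -1) :
    ∫ y in Ioi (0:ℝ), (y + 1) ^ p = 1 / (-p - 1) := by
  have hderiv : ∀ y ∈ Ici (0:ℝ),
      HasDerivAt (fun y : ℝ => (y + 1) ^ (p + 1) / (p + 1)) ((y + 1) ^ p) y := by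
    intro y hy
    simp only [mem_Ici] at hy
    have h := ((hasDerivAt_id y).add_const 1).rpow_const (p := p + 1) (Or.inl (by positivity))
    have h2 := h.div_const (p + 1)
    have hne : p + 1 ≠ 0 := by linarith
    refine h2.congr_deriv ?_
    rw [one_mul, add_sub_cancel_right, mul_div_cancel_left₀ _ hne]
    rfl
  have htend : Tendsto (fun y : ℝ => (y + 1) ^ (p + 1) / (p + 1)) atTop (nhds 0) := by
    have h0 : (0:ℝ) < -(p + 1) := by linarith
    have := (tendsto_rpow_neg_atTop h0).comp (tendsto_atTop_add_const_right atTop 1 tendsto_id)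
    rw [neg_neg] at this
    simpa using this.div_const (p + 1)
  rw [integral_Ioi_of_hasDerivAt_of_tendsto' hderiv (aux_integrable_s7 p hp) htend]
  have hne : p + 1 ≠ 0 := by linarith
  have hne2 : -p - 1 ≠ 0 := by linarith
  rw [zero_add, Real.one_rpow, zero_sub, ← neg_div, div_eq_div_iff hne hne2]
  ring

/-- Uniform domination in the polynomial-tail case: if `H̄(y) ≤ C(y+1)^{−κ}` with `κ > 1`,
`1 < κ̃ < κ`, then for all `x ≥ 0` and `x₀ ≥ 1`,
`∫₀^∞ H̄(y) ((x+x₀+y)/(x+x₀))^{κ̃−1} dy ≤ 2^{κ̃−1} C / (κ − κ̃) < ∞`. -/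
theorem stmt7 (κ C κ' : ℝ) (hκ : 1 < κ) (hC : 0 < C) (hκ'1 : 1 < κ') (hκ'κ : κ' < κ)
    (Hbar : ℝ → ℝ) (hHbar0 : ∀ y : ℝ, 0 ≤ y → 0 ≤ Hbar y)
    (hHbar1 : ∀ y : ℝ, 0 ≤ y → Hbar y ≤ 1)
    (htail : ∀ y : ℝ, 0 ≤ y → Hbar y ≤ C * (y + 1) ^ (-κ))
    (x x₀ : ℝ) (hx : 0 ≤ x) (hx₀ : 1 ≤ x₀) :
    ∫⁻ y in Set.Ioi (0 : ℝ),
        ENNReal.ofReal (Hbar y * ((x + x₀ + y) / (x + x₀)) ^ (κ' - 1))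
      ≤ ENNReal.ofReal (2 ^ (κ' - 1) * C / (κ - κ')) := by
  set p : ℝ := κ' - 1 - κ with hpdef
  have hp : p < -1 := by simp only [hpdef]; linarith
  have hs : (1:ℝ) ≤ x + x₀ := by linarith
  have hs0 : (0:ℝ) < x + x₀ := by linarith
  -- pointwise bound
  have hpt : ∀ y ∈ Ioi (0:ℝ),
      ENNReal.ofReal (Hbar y * ((x + x₀ + y) / (x + x₀)) ^ (κ' - 1))
        ≤ ENNReal.ofReal (C * (y + 1) ^ p) := by
    intro y hy
    simp only [mem_Ioi] at hy
    apply ENNReal.ofReal_le_ofReal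
    have hy1 : (0:ℝ) < y + 1 := by linarith
    have hratio : (x + x₀ + y) / (x + x₀) ≤ y + 1 := by
      rw [div_le_iff₀ hs0]
      nlinarith
    have hratio0 : (0:ℝ) ≤ (x + x₀ + y) / (x + x₀) := by positivity
    have h1 : ((x + x₀ + y) / (x + x₀)) ^ (κ' - 1) ≤ (y + 1) ^ (κ' - 1) :=
      Real.rpow_le_rpow hratio0 hratio (by linarith)
    calc Hbar y * ((x + x₀ + y) / (x + x₀)) ^ (κ' - 1)
        ≤ (C * (y + 1) ^ (-κ)) * (y + 1) ^ (κ' - 1) := by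
          apply mul_le_mul (htail y hy.le) h1
            (Real.rpow_nonneg hratio0 _)
            (by positivity)
      _ = C * (y + 1) ^ p := by
          rw [mul_assoc, ← Real.rpow_add hy1]
          rw [hpdef]
          ring_nf
  refine le_trans (setLIntegral_mono' measurableSet_Ioi hpt) ?_
  have hint : IntegrableOn (fun y : ℝ => C * (y + 1) ^ p) (Ioi 0) :=
    (aux_integrable_s7 p hp).const_mul C
  have hae : 0 ≤ᵐ[volume.restrict (Ioi (0:ℝ))] fun y : ℝ => C * (y + 1) ^ p := by
    filter_upwards [ae_restrict_mem measurableSet_Ioi] with y hy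
    simp only [mem_Ioi] at hy
    positivity
  rw [← ofReal_integral_eq_lintegral_ofReal hint hae]
  apply ENNReal.ofReal_le_ofReal
  rw [MeasureTheory.integral_const_mul, aux_integral p hp]
  have h21 : (1:ℝ) ≤ 2 ^ (κ' - 1) := Real.one_le_rpow one_le_two (by linarith)
  have hd : -p - 1 = κ - κ' := by simp only [hpdef]; ring
  rw [hd, mul_one_div, div_le_div_iff₀ (by linarith) (by linarith : (0:ℝ) < κ - κ')]
  nlinarith [mul_pos hC (show (0:ℝ) < κ - κ' by linarith)]
end

section
/- Let κ > 1, C > 0, 1 < κ̃ < κ, and let H be a probability measure on (0,∞) with mean 1/μ ∈ (0,∞), whose tail H̄(y) = H((y,∞)) satisfies H̄(y) ≤ C(y+1)^{−κ} for all y ≥ 0. Let 0 < λ < μ and ρ̃ ∈ (λ/μ, 1). Then there exists x₀ ≥ 1 such that for all x ≥ 0: λ∫₀^∞ H̄(y) (x+x₀+y)^{κ̃−1} dy ≤ ρ̃ (x+x₀)^{κ̃−1}. -/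
open MeasureTheory Set Filter Topology

/-- Inequality (4.34) of the paper: for `H` on `(0,∞)` with mean `1/μ` and polynomial tail
`H̄(y) ≤ C(y+1)^{−κ}` (`κ > 1`, `1 < κ̃ < κ`), arrival rate `0 < λ < μ` and `ρ̃ ∈ (λ/μ, 1)`,
there exists `x₀ ≥ 1` such that for all `x ≥ 0`,
`λ∫₀^∞ H̄(y) (x+x₀+y)^{κ̃−1} dy ≤ ρ̃ (x+x₀)^{κ̃−1}`. -/
theorem stmt9 (κ C κ' : ℝ) (hκ : 1 < κ) (hC : 0 < C) (hκ'1 : 1 < κ') (hκ'κ : κ' < κ)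
    (H : Measure ℝ) [IsProbabilityMeasure H] (hH0 : H (Set.Iic 0) = 0)
    (μ : ℝ) (hμ : 0 < μ)
    (hmeanInt : IntegrableOn (fun y : ℝ => y) (Set.Ioi 0) H)
    (hmean : ∫ y in Set.Ioi (0 : ℝ), y ∂H = 1 / μ)
    (htail : ∀ y : ℝ, 0 ≤ y → (H (Set.Ioi y)).toReal ≤ C * (y + 1) ^ (-κ))
    (lam ρ' : ℝ) (hlam : 0 < lam) (hlamμ : lam < μ) (hρ'1 : lam / μ < ρ') (hρ'2 : ρ' < 1) :
    ∃ x₀ : ℝ, 1 ≤ x₀ ∧ ∀ x : ℝ, 0 ≤ x →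
      lam * ∫ y in Set.Ioi (0 : ℝ), (H (Set.Ioi y)).toReal * (x + x₀ + y) ^ (κ' - 1)
        ≤ ρ' * (x + x₀) ^ (κ' - 1) := by
  set p := κ' - 1 with hp_def
  have hp : 0 < p := by simp only [hp_def]; linarith
  have hpκ : p - κ < -1 := by simp only [hp_def]; linarith
  set Hb : ℝ → ℝ := fun y => (H (Set.Ioi y)).toReal with hHb_def
  have hHb_anti : Antitone Hb := fun a b hab =>
    ENNReal.toReal_mono (measure_ne_top H _)
      (measure_mono fun x hx => lt_of_le_of_lt hab hx)
  have hHb_meas : Measurable Hb := hHb_anti.measurable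
  have hHb_nonneg : ∀ y, 0 ≤ Hb y := fun y => ENNReal.toReal_nonneg
  have hHb_le_one : ∀ y, Hb y ≤ 1 := by
    intro y
    have : H (Set.Ioi y) ≤ 1 := prob_le_one
    simpa [hHb_def] using ENNReal.toReal_mono ENNReal.one_ne_top this
  -- the dominating function G y = Hb y * (y+1)^p is integrable on (0,∞)
  set G : ℝ → ℝ := fun y => Hb y * (y + 1) ^ p with hG_def
  have hG_meas : Measurable G :=
    hHb_meas.mul ((Real.continuous_rpow_const hp.le).measurable.comp
      (measurable_id.add_const 1))
  have hG_nonneg : ∀ y : ℝ, 0 ≤ y → 0 ≤ G y := fun y hy =>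
    mul_nonneg (hHb_nonneg y) (Real.rpow_nonneg (by linarith) _)
  have hG_int : IntegrableOn G (Set.Ioi 0) := by
    have hsplit : Set.Ioi (0 : ℝ) = Set.Ioc 0 1 ∪ Set.Ioi 1 :=
      (Set.Ioc_union_Ioi_eq_Ioi zero_le_one).symm
    rw [hsplit]
    apply IntegrableOn.union
    · apply Measure.integrableOn_of_bounded (M := 2 ^ p) measure_Ioc_lt_top.ne
        hG_meas.aestronglyMeasurable
      refine (ae_restrict_iff' measurableSet_Ioc).2 (Eventually.of_forall fun y hy => ?_)
      have hy0 : 0 < y := hy.1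
      have hy1 : y ≤ 1 := hy.2
      have h1 : (y + 1) ^ p ≤ 2 ^ p :=
        Real.rpow_le_rpow (by linarith) (by linarith) hp.le
      have : G y ≤ 2 ^ p := by
        calc G y ≤ 1 * (y + 1) ^ p := by
              exact mul_le_mul_of_nonneg_right (hHb_le_one y)
                (Real.rpow_nonneg (by linarith) _)
          _ = (y + 1) ^ p := one_mul _
          _ ≤ 2 ^ p := h1
      have hnn : 0 ≤ G y := hG_nonneg y hy0.le
      rw [Real.norm_eq_abs, abs_of_nonneg hnn]
      exact this
    · have hmaj : IntegrableOn (fun y : ℝ => C * y ^ (p - κ)) (Set.Ioi 1) :=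
        (integrableOn_Ioi_rpow_of_lt hpκ one_pos).const_mul C
      apply hmaj.mono' hG_meas.aestronglyMeasurable
      refine (ae_restrict_iff' measurableSet_Ioi).2 (Eventually.of_forall fun y hy => ?_)
      have hy1 : (1 : ℝ) < y := hy
      have hy0 : (0 : ℝ) < y := lt_trans one_pos hy1
      have hb1 : Hb y ≤ C * (y + 1) ^ (-κ) := htail y hy0.le
      have hnn : 0 ≤ G y := hG_nonneg y hy0.le
      rw [Real.norm_eq_abs, abs_of_nonneg hnn]
      calc G y ≤ (C * (y + 1) ^ (-κ)) * (y + 1) ^ p :=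
            mul_le_mul_of_nonneg_right hb1 (Real.rpow_nonneg (by linarith) _)
        _ = C * (y + 1) ^ (p - κ) := by
            rw [mul_assoc, ← Real.rpow_add (by linarith)]
            ring_nf
        _ ≤ C * y ^ (p - κ) := by
            apply mul_le_mul_of_nonneg_left _ hC.le
            exact Real.rpow_le_rpow_of_nonpos hy0 (by linarith) (by linarith)
  -- the approximating sequence
  set F : ℕ → ℝ → ℝ := fun n y => Hb y * (1 + y / (n + 1)) ^ p with hF_def
  have hF_meas : ∀ n : ℕ, Measurable (F n) := fun n =>
    hHb_meas.mul ((Real.continuous_rpow_const hp.le).measurable.comp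
      ((measurable_id.div_const _).const_add 1))
  have hF_nonneg : ∀ n : ℕ, ∀ y : ℝ, 0 ≤ y → 0 ≤ F n y := by
    intro n y hy
    exact mul_nonneg (hHb_nonneg y) (Real.rpow_nonneg (by positivity) _)
  have hF_le_G : ∀ n : ℕ, ∀ y : ℝ, 0 ≤ y → F n y ≤ G y := by
    intro n y hy
    apply mul_le_mul_of_nonneg_left _ (hHb_nonneg y)
    apply Real.rpow_le_rpow (by positivity) _ hp.le
    have hn1 : (1 : ℝ) ≤ (n : ℝ) + 1 := by
      have : (0 : ℝ) ≤ (n : ℝ) := Nat.cast_nonneg n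
      linarith
    have : y / ((n : ℝ) + 1) ≤ y := by
      rw [div_le_iff₀ (by linarith)]
      nlinarith
    linarith
  have hF_int : ∀ n : ℕ, IntegrableOn (F n) (Set.Ioi 0) := by
    intro n
    apply hG_int.mono' (hF_meas n).aestronglyMeasurable
    refine (ae_restrict_iff' measurableSet_Ioi).2 (Eventually.of_forall fun y hy => ?_)
    have hy0 : (0 : ℝ) < y := hy
    rw [Real.norm_eq_abs, abs_of_nonneg (hF_nonneg n y hy0.le)]
    exact hF_le_G n y hy0.le
  -- layercake : ∫_{(0,∞)} Hb = 1/μ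
  have hae : ∀ᵐ y ∂H, y ∈ Set.Ioi (0 : ℝ) := by
    rw [ae_iff]
    have : {y : ℝ | ¬ y ∈ Set.Ioi (0 : ℝ)} = Set.Iic 0 := by
      ext y; simp [Set.mem_Ioi, Set.mem_Iic, not_lt]
    rw [this]; exact hH0
  have hrestrict : H.restrict (Set.Ioi 0) = H := Measure.restrict_eq_self_of_ae_mem hae
  have hid_int : Integrable (fun y : ℝ => y) H := by
    rw [← hrestrict]; exact hmeanInt
  have hid_nn : 0 ≤ᵐ[H] fun y : ℝ => y := hae.mono fun y hy => le_of_lt hy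
  have hlayer : ∫ t in Set.Ioi (0 : ℝ), Hb t = 1 / μ := by
    have key := hid_int.integral_eq_integral_meas_lt hid_nn
    calc ∫ t in Set.Ioi (0 : ℝ), Hb t
        = ∫ t in Set.Ioi (0 : ℝ), (H {a : ℝ | t < a}).toReal := rfl
      _ = ∫ y : ℝ, y ∂H := key.symm
      _ = ∫ y in Set.Ioi (0 : ℝ), y ∂H := by conv_lhs => rw [← hrestrict]
      _ = 1 / μ := hmean
  -- dominated convergence
  have hlim : Tendsto (fun n : ℕ => ∫ y in Set.Ioi (0 : ℝ), F n y)
      atTop (𝓝 (∫ y in Set.Ioi (0 : ℝ), Hb y)) := by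
    apply tendsto_integral_of_dominated_convergence G
      (fun n => (hF_meas n).aestronglyMeasurable) hG_int
    · intro n
      refine (ae_restrict_iff' measurableSet_Ioi).2 (Eventually.of_forall fun y hy => ?_)
      have hy0 : (0 : ℝ) < y := hy
      rw [Real.norm_eq_abs, abs_of_nonneg (hF_nonneg n y hy0.le)]
      exact hF_le_G n y hy0.le
    · refine (ae_restrict_iff' measurableSet_Ioi).2 (Eventually.of_forall fun y hy => ?_)
      have hy0 : (0 : ℝ) < y := hy
      have h1 : Tendsto (fun n : ℕ => y / ((n : ℝ) + 1)) atTop (𝓝 0) := by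
        have := tendsto_one_div_add_atTop_nhds_zero_nat.const_mul y
        simpa [div_eq_mul_inv, mul_comm] using this
      have h2 : Tendsto (fun n : ℕ => 1 + y / ((n : ℝ) + 1)) atTop (𝓝 1) := by
        have := h1.const_add 1
        simpa using this
      have h3 : Tendsto (fun n : ℕ => (1 + y / ((n : ℝ) + 1)) ^ p) atTop (𝓝 1) := by
        have hc : ContinuousAt (fun x : ℝ => x ^ p) 1 :=
          (Real.continuousAt_rpow_const 1 p (Or.inl one_ne_zero))
        have := hc.tendsto.comp h2
        simpa [Function.comp_def, Real.one_rpow] using this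
      have := h3.const_mul (Hb y)
      simpa [hF_def, mul_one] using this
  rw [hlayer] at hlim
  -- choose N
  have hμρ : 1 / μ < ρ' / lam := by
    rw [div_lt_div_iff₀ hμ hlam, mul_comm]
    rw [div_lt_iff₀ hμ] at hρ'1
    linarith
  obtain ⟨N, hN⟩ := (hlim.eventually_lt_const hμρ).exists
  refine ⟨(N : ℝ) + 1, by have := Nat.cast_nonneg (α := ℝ) N; linarith, fun x hx => ?_⟩
  set z := x + ((N : ℝ) + 1) with hz_def
  have hN1 : (0 : ℝ) < (N : ℝ) + 1 := by positivity
  have hz1 : (N : ℝ) + 1 ≤ z := by simp only [hz_def]; linarith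
  have hz0 : 0 < z := lt_of_lt_of_le hN1 hz1
  -- pointwise bound
  have hpt : ∀ y : ℝ, 0 < y → Hb y * (z + y) ^ p ≤ z ^ p * F N y := by
    intro y hy
    have hzy : z + y = z * (1 + y / z) := by field_simp
    have h1 : (z + y) ^ p = z ^ p * (1 + y / z) ^ p := by
      rw [hzy, Real.mul_rpow hz0.le (by positivity)]
    have h2 : (1 + y / z) ^ p ≤ (1 + y / ((N : ℝ) + 1)) ^ p := by
      apply Real.rpow_le_rpow (by positivity) _ hp.le
      have : y / z ≤ y / ((N : ℝ) + 1) := div_le_div_of_nonneg_left hy.le hN1 hz1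
      linarith
    calc Hb y * (z + y) ^ p = Hb y * (z ^ p * (1 + y / z) ^ p) := by rw [h1]
      _ ≤ Hb y * (z ^ p * (1 + y / ((N : ℝ) + 1)) ^ p) := by
          apply mul_le_mul_of_nonneg_left _ (hHb_nonneg y)
          exact mul_le_mul_of_nonneg_left h2 (Real.rpow_nonneg hz0.le _)
      _ = z ^ p * F N y := by simp only [hF_def]; ring
  have hmono : ∫ y in Set.Ioi (0 : ℝ), Hb y * (z + y) ^ p
      ≤ ∫ y in Set.Ioi (0 : ℝ), z ^ p * F N y := by
    apply integral_mono_of_nonneg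
    · refine (ae_restrict_iff' measurableSet_Ioi).2 (Eventually.of_forall fun y hy => ?_)
      have hy0 : (0 : ℝ) < y := hy
      exact mul_nonneg (hHb_nonneg y) (Real.rpow_nonneg (by linarith) _)
    · exact (hF_int N).const_mul _
    · refine (ae_restrict_iff' measurableSet_Ioi).2 (Eventually.of_forall fun y hy => ?_)
      exact hpt y hy
  have hconst : ∫ y in Set.Ioi (0 : ℝ), z ^ p * F N y
      = z ^ p * ∫ y in Set.Ioi (0 : ℝ), F N y := integral_const_mul _ _
  have hFN_nonneg : 0 ≤ ∫ y in Set.Ioi (0 : ℝ), F N y := by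
    apply integral_nonneg_of_ae
    refine (ae_restrict_iff' measurableSet_Ioi).2 (Eventually.of_forall fun y hy => ?_)
    exact hF_nonneg N y (le_of_lt hy)
  have hfinal : lam * ∫ y in Set.Ioi (0 : ℝ), Hb y * (z + y) ^ p ≤ ρ' * z ^ p := by
    have h1 : lam * ∫ y in Set.Ioi (0 : ℝ), Hb y * (z + y) ^ p
        ≤ lam * (z ^ p * ∫ y in Set.Ioi (0 : ℝ), F N y) := by
      apply mul_le_mul_of_nonneg_left _ hlam.le
      rw [← hconst]; exact hmono
    have h2 : lam * (z ^ p * ∫ y in Set.Ioi (0 : ℝ), F N y)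
        ≤ lam * (z ^ p * (ρ' / lam)) := by
      apply mul_le_mul_of_nonneg_left _ hlam.le
      exact mul_le_mul_of_nonneg_left hN.le (Real.rpow_nonneg hz0.le _)
    have h3 : lam * (z ^ p * (ρ' / lam)) = ρ' * z ^ p := by
      field_simp
    linarith
  calc lam * ∫ y in Set.Ioi (0 : ℝ), Hb y * (x + ((N : ℝ) + 1) + y) ^ p
      = lam * ∫ y in Set.Ioi (0 : ℝ), Hb y * (z + y) ^ p := by rw [hz_def]
    _ ≤ ρ' * z ^ p := hfinal
    _ = ρ' * (x + ((N : ℝ) + 1)) ^ p := by rw [hz_def]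
end
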